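/- On ℝ^4 with coordinates (θ_1, θ_2, p_1, p_2), let π(ℏ) = π_0 + ℏπ_1, where π_0 is the standard Poisson matrix (nonzero entries π_0^{θ_1 p_1} = π_0^{θ_2 p_2} = 1 = −π_0^{p_1 θ_1} = −π_0^{p_2 θ_2}) and π_1 is the antisymmetric matrix with nonzero entries π_1^{p_1 p_2} = −1 = −π_1^{p_2 p_1}, and let ⋆ be the Moyal star-product built from the ℏ-dependent matrix π(ℏ). Let X = p_1 ∂/∂p_1 + p_2 ∂/∂p_2 be the Liouville vector field. Then ℏ∂_ℏ + X is a derivation of ⋆: (ℏ∂_ℏ + X)(F⋆G) = ((ℏ∂_ℏ + X)F)⋆G + F⋆((ℏ∂_ℏ + X)G) for all F,G ∈ C^∞(ℝ^4,ℂ)[[ℏ]]. (Thus the quantization of T*T^2 corresponding to the ℏ-dependent symplectic structure ω_0 + ℏ dθ_1∧dθ_2, whose characteristic class is nonzero but ℏ-independent, admits the classical Liouville vector field as a quantum Liouville operator.) -/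

import Mathlib

/-!  Common definitions: formal Weyl algebras, Moyal products, Weyl-bundle valued
differential forms on ℝ^{2n}, Fedosov connections, star-products on smooth functions,
multidifferential operators and Hochschild coboundaries.  -/

noncomputable section
namespace StarPaper

open scoped BigOperators

/-! ### Formal power series in y -/

/-- The fiber coefficient ring `ℂ[[y^1, …, y^N]]`. -/
abbrev Wc (N : ℕ) := MvPowerSeries (Fin N) ℂ

/-- Build a formal power series from its coefficient function. -/
def Wc.mk {N : ℕ} (f : (Fin N →₀ ℕ) → ℂ) : Wc N := f

/-- Formal partial derivative `∂/∂y^i` on `ℂ[[y]]`. -/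
def yD {N : ℕ} (i : Fin N) (a : Wc N) : Wc N :=
  Wc.mk fun β => ((β i : ℂ) + 1) * MvPowerSeries.coeff (R := ℂ) (β + Finsupp.single i 1) a

/-- Formal iterated partial derivative `∂^α` on `ℂ[[y]]`. -/
def yDM {N : ℕ} (α : Fin N →₀ ℕ) (a : Wc N) : Wc N :=
  Wc.mk fun β =>
    (∏ i : Fin N, (((β i + α i).factorial : ℂ) / ((β i).factorial : ℂ))) *
      MvPowerSeries.coeff (R := ℂ) (β + α) a

/-- Iterated derivatives along a tuple of directions. -/
def iterD {R : Type*} {N : ℕ} (D : Fin N → R → R) : {k : ℕ} → (Fin k → Fin N) → R → R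
  | 0, _, a => a
  | _ + 1, v, a => D (v 0) (iterD D (fun t => v t.succ) a)

/-- The `k`-th term of the Moyal–Weyl product for a constant matrix `π`:
`((-iℏ/2)^k/k!) Σ π^{i₁j₁}⋯π^{i_kj_k} (∂^k a/∂y^{i₁}⋯) (∂^k b/∂y^{j₁}⋯)`. -/
def moyalTerm {R : Type*} [CommRing R] [Module ℂ R] {N : ℕ}
    (D : Fin N → R → R) (π : Matrix (Fin N) (Fin N) ℂ) (k : ℕ) (a b : R) : R :=
  ((-Complex.I / 2) ^ k / (Nat.factorial k : ℂ)) •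
    ∑ i : Fin k → Fin N, ∑ j : Fin k → Fin N,
      (∏ t, π (i t) (j t)) • (iterD D i a * iterD D j b)

/-- Moyal product on formal power series `Σ_m ℏ^m F_m` (coefficients `F : ℕ → R`). -/
def moyalN {R : Type*} [CommRing R] [Module ℂ R] {N : ℕ} (D : Fin N → R → R)
    (π : Matrix (Fin N) (Fin N) ℂ) (F G : ℕ → R) : ℕ → R :=
  fun m => ∑ k ∈ Finset.range (m + 1), ∑ l ∈ Finset.range (m - k + 1),
    moyalTerm D π k (F l) (G (m - k - l))

/-- Moyal product on formal Laurent series `Σ_m ℏ^m F_m` (coefficients `F : ℤ → R`);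
the sum over contributions is finite for series bounded below in `ℏ`-degree. -/
def moyalZ {R : Type*} [CommRing R] [Module ℂ R] {N : ℕ} (D : Fin N → R → R)
    (π : Matrix (Fin N) (Fin N) ℂ) (F G : ℤ → R) : ℤ → R :=
  fun m => ∑ᶠ p : ℕ × ℤ, moyalTerm D π p.1 (F p.2) (G (m - p.1 - p.2))

/-- Moyal term for an `ℏ`-dependent matrix `π(ℏ) = π₀ + ℏπ₁`: the part of the `k`-th
Moyal term in which the product of matrix entries contributes `ℏ^d`. -/
def moyalTermH {R : Type*} [CommRing R] [Module ℂ R] {N : ℕ} (D : Fin N → R → R)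
    (π0 π1 : Matrix (Fin N) (Fin N) ℂ) (k d : ℕ) (a b : R) : R :=
  ((-Complex.I / 2) ^ k / (Nat.factorial k : ℂ)) •
    ∑ i : Fin k → Fin N, ∑ j : Fin k → Fin N,
      (∑ T ∈ Finset.univ.powerset.filter (fun T : Finset (Fin k) => T.card = d),
          (∏ t ∈ T, π1 (i t) (j t)) * ∏ t ∈ Tᶜ, π0 (i t) (j t)) •
        (iterD D i a * iterD D j b)

/-- Moyal product built from the `ℏ`-dependent matrix `π(ℏ) = π₀ + ℏπ₁`. -/
def moyalNH {R : Type*} [CommRing R] [Module ℂ R] {N : ℕ} (D : Fin N → R → R)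
    (π0 π1 : Matrix (Fin N) (Fin N) ℂ) (F G : ℕ → R) : ℕ → R :=
  fun m => ∑ k ∈ Finset.range (m + 1), ∑ d ∈ Finset.range (m - k + 1),
    ∑ l ∈ Finset.range (m - k - d + 1),
      moyalTermH D π0 π1 k d (F l) (G (m - k - d - l))

/-- The standard Poisson matrix `π` on `ℝ^{2n}` (inverse of the standard symplectic
matrix `ω`, normalized by `Σ_m ω_{jm} π^{mn} = δ_j^n`). -/
def stdPi (n : ℕ) : Matrix (Fin (2 * n)) (Fin (2 * n)) ℂ :=
  Matrix.of fun i j =>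
    if (i : ℕ) + n = (j : ℕ) then 1 else if (j : ℕ) + n = (i : ℕ) then -1 else 0

/-- The standard symplectic matrix `ω_{ij}`. -/
def stdOmega (n : ℕ) : Matrix (Fin (2 * n)) (Fin (2 * n)) ℂ := -stdPi n

/-! ### The formal Weyl algebra `W = ℂ[[y,ℏ]]` -/

/-- The formal Weyl algebra as `ℏ`-coefficient sequences. -/
abbrev Wa (N : ℕ) := ℕ → Wc N

/-- Moyal–Weyl product on `W` for a constant matrix `π`. -/
def wmulPi {N : ℕ} (π : Matrix (Fin N) (Fin N) ℂ) (a b : Wa N) : Wa N := moyalN yD π a b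

/-- Moyal–Weyl product on `W` for the standard symplectic Poisson matrix. -/
def wmul {n : ℕ} (a b : Wa (2 * n)) : Wa (2 * n) := wmulPi (stdPi n) a b

/-- The unit `1 ∈ W`. -/
def oneW (N : ℕ) : Wa N := fun m => if m = 0 then 1 else 0

/-- Scalar multiplication by a formal power series `s ∈ ℂ[[ℏ]]` (given by its
coefficients `s : ℕ → ℂ`). -/
def hsmul {N : ℕ} (s : ℕ → ℂ) (a : Wa N) : Wa N :=
  fun m => ∑ l ∈ Finset.range (m + 1), s l • a (m - l)

/-- The operator `E = -(i/2) Σ_j y^j ∂/∂y^j` on `ℂ[[y]]`. -/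
def EulW {N : ℕ} (a : Wc N) : Wc N :=
  Wc.mk fun β => -Complex.I / 2 * (∑ i : Fin N, (β i : ℂ)) * MvPowerSeries.coeff (R := ℂ) β a

/-- `E` on the Weyl algebra, acting on each `ℏ`-coefficient. -/
def EulWa {N : ℕ} (a : Wa N) : Wa N := fun m => EulW (a m)

/-- Termwise derivative `∂/∂ℏ`. -/
def hD {N : ℕ} (a : Wa N) : Wa N := fun m => (((m + 1 : ℕ) : ℂ)) • a (m + 1)

/-- Multiplication by `ℏ`. -/
def hM {N : ℕ} (a : Wa N) : Wa N := fun m => match m with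
  | 0 => 0
  | Nat.succ m' => a m'

/-- Division by `ℏ` (exact on elements divisible by `ℏ`; discards the constant term). -/
def hInv {N : ℕ} (a : Wa N) : Wa N := fun m => a (m + 1)

/-- The `ℏ`-derivative of the Moyal–Weyl product structure:
`c₁(a,b) = ∂(a⋆b)/∂ℏ − (∂a/∂ℏ)⋆b − a⋆(∂b/∂ℏ)`. -/
def c1W {n : ℕ} (a b : Wa (2 * n)) : Wa (2 * n) :=
  hD (wmul a b) - wmul (hD a) b - wmul a (hD b)

/-! ### W-valued differential forms on ℝ^{2n} -/

/-- Points of `ℝ^{2n}`. -/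
abbrev Pt (n : ℕ) := Fin (2 * n) → ℝ

/-- `W`-valued exterior forms on `ℝ^{2n}`: the component at a finite index set
`S = {j₁ < ⋯ < j_q}` is the coefficient of `dx^{j₁} ∧ ⋯ ∧ dx^{j_q}`. -/
abbrev WF (n : ℕ) := Finset (Fin (2 * n)) → Pt n → Wa (2 * n)

/-- Sign `(-1)^{#{j ∈ S, j < i}}` for inserting `dx^i` in front of `dx^S`. -/
def insSign {N : ℕ} (S : Finset (Fin N)) (i : Fin N) : ℂ :=
  (-1) ^ (S.filter fun j => j < i).card

/-- Koszul sign for merging `dx^{S₁} ∧ dx^{S₂}` into increasing order. -/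
def shuffleSign {N : ℕ} (S1 S2 : Finset (Fin N)) : ℂ :=
  (-1) ^ ((S1 ×ˢ S2).filter fun p => p.2 < p.1).card

/-- `∂/∂y^i` on the Weyl algebra. -/
def yDa {N : ℕ} (i : Fin N) (w : Wa N) : Wa N := fun m => yD i (w m)

/-- The operator `δ a = Σ_i dx^i ∧ ∂a/∂y^i`. -/
def deltaW {n : ℕ} (a : WF n) : WF n :=
  fun S x => ∑ i ∈ S, insSign S i • yDa i (a (S.erase i) x)

/-- The partial derivative `∂/∂x^i` of a `W`-valued function, taken coefficientwise. -/
def xD {n : ℕ} (i : Fin (2 * n)) (f : Pt n → Wa (2 * n)) (x : Pt n) : Wa (2 * n) :=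
  fun m => Wc.mk fun β =>
    fderiv ℝ (fun x' => MvPowerSeries.coeff (R := ℂ) β (f x' m)) x (Pi.single i 1)

/-- The exterior derivative `d a = Σ_i dx^i ∧ ∂a/∂x^i` on `W`-valued forms. -/
def extD {n : ℕ} (a : WF n) : WF n :=
  fun S x => ∑ i ∈ S, insSign S i • xD i (a (S.erase i)) x

/-- The product on `W`-valued forms: Moyal–Weyl product combined with wedge product. -/
def wMulF {n : ℕ} (a b : WF n) : WF n :=
  fun S x => ∑ S1 ∈ S.powerset, shuffleSign S1 (S \ S1) • wmul (a S1 x) (b (S \ S1) x)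

/-- Graded commutator `[r, a] = r⋆a − (−1)^{|a|} a⋆r` with a form `r` of degree 1. -/
def comm1 {n : ℕ} (r a : WF n) : WF n :=
  fun S x => wMulF r a S x - (-1 : ℂ) ^ (S.card - 1) • wMulF a r S x

/-- Graded commutator `[u, a] = u⋆a − a⋆u` with a form `u` of even degree. -/
def commE {n : ℕ} (u a : WF n) : WF n := fun S x => wMulF u a S x - wMulF a u S x

/-- The connection `D = −δ + d + (i/ℏ)[r, ·]` determined by a `W`-valued 1-form `r`. -/
def fedD {n : ℕ} (r a : WF n) : WF n :=
  fun S x => -deltaW a S x + extD a S x + Complex.I • hInv (comm1 r a S x)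

/-- A `W`-valued form has smooth coefficients. -/
def WF.Smooth {n : ℕ} (a : WF n) : Prop :=
  ∀ S m β, ContDiff ℝ (⊤ : ℕ∞) fun x => MvPowerSeries.coeff (R := ℂ) β (a S x m)

/-- A `W`-valued form is homogeneous of form-degree `q`. -/
def isForm {n : ℕ} (q : ℕ) (a : WF n) : Prop := ∀ S, S.card ≠ q → a S = 0

/-- A `W`-valued form is scalar: all coefficients are independent of the `y` variables. -/
def isScalar {n : ℕ} (a : WF n) : Prop :=
  ∀ S x m β, β ≠ 0 → MvPowerSeries.coeff (R := ℂ) β (a S x m) = 0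

/-- The constant standard symplectic 2-form `ω = (1/2) Σ ω_{ij} dx^i ∧ dx^j`. -/
def omegaF (n : ℕ) : WF n :=
  fun S _ m =>
    if m = 0 then
      MvPowerSeries.C (σ := Fin (2 * n)) (R := ℂ)
        (∑ i : Fin (2 * n), ∑ j : Fin (2 * n),
          if i < j ∧ S = {i, j} then stdOmega n i j else 0)
    else 0

/-- The curvature `Ω = ω + δr − dr − (i/ℏ) r⋆r` of the connection `−δ + d + (i/ℏ)[r,·]`. -/
def curv {n : ℕ} (r : WF n) : WF n :=
  fun S x => omegaF n S x + deltaW r S x - extD r S x - Complex.I • hInv (wMulF r r S x)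

/-- The operator `δ⁻¹`, acting as `(1/(p+q)) Σ_k y^k ι_k` on the part of `y`-degree `p`
and form-degree `q` (and as `0` for `p = q = 0`). -/
def deltaInv {n : ℕ} (a : WF n) : WF n :=
  fun S x m => Wc.mk fun β =>
    ((((β.sum fun _ e => e) + S.card : ℕ) : ℂ))⁻¹ *
      ∑ k : Fin (2 * n),
        if k ∉ S ∧ 1 ≤ β k then
          insSign S k * MvPowerSeries.coeff (R := ℂ) (β - Finsupp.single k 1) (a (insert k S) x m)
        else 0

/-! ### x-independent W-valued exterior forms (the graded algebra W⊗Λ) -/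

/-- `W`-valued exterior forms with constant coefficients. -/
abbrev WL (n : ℕ) := Finset (Fin (2 * n)) → Wa (2 * n)

/-- `δ` on `W ⊗ Λ`. -/
def deltaWL {n : ℕ} (a : WL n) : WL n :=
  fun S => ∑ i ∈ S, insSign S i • yDa i (a (S.erase i))

/-- Product (Moyal combined with wedge) on `W ⊗ Λ`. -/
def wMulL {n : ℕ} (a b : WL n) : WL n :=
  fun S => ∑ S1 ∈ S.powerset, shuffleSign S1 (S \ S1) • wmul (a S1) (b (S \ S1))

/-- `E` on `W ⊗ Λ`, acting on the `W`-coefficients. -/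
def EulL {n : ℕ} (a : WL n) : WL n := fun S => EulWa (a S)

/-- The `W`-valued 1-form `Σ_{i,j} ω_{ij} y^i dx^j`. -/
def oydxW (n : ℕ) : WL n :=
  fun S m =>
    if m = 0 then
      ∑ j : Fin (2 * n),
        (if S = {j} then ∑ i : Fin (2 * n), stdOmega n i j • MvPowerSeries.X i else 0)
    else 0

/-- The 1-form `K₀ = −(Er − iℏ ∂r/∂ℏ + i r + (i/2) Σ ω_{ij} y^i dx^j)`. -/
def K0 {n : ℕ} (r : WF n) : WF n :=
  fun S x =>
    -(EulWa (r S x) - Complex.I • hM (hD (r S x)) + Complex.I • r S x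
      + (Complex.I / 2) • oydxW n S)

/-- The quantum Liouville-type operator `ρ(u) = (ℏ/i) ∂u/∂ℏ + E u`. -/
def rhoW {n : ℕ} (u : WF n) : WF n :=
  fun S x m => (-Complex.I * (m : ℂ)) • u S x m + EulW (u S x m)

/-- `c₁` extended to `W`-valued forms. -/
def c1F {n : ℕ} (a b : WF n) : WF n :=
  fun S x => ∑ S1 ∈ S.powerset, shuffleSign S1 (S \ S1) • c1W (a S1 x) (b (S \ S1) x)

/-! ### The Laurent (ℏ-inverted) Weyl algebra and forms -/

/-- The extended Weyl algebra `W⁺ = ℂ[[y]][ℏ⁻¹,ℏ]]` as `ℏ`-coefficient sequences. -/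
abbrev WaZ (N : ℕ) := ℤ → Wc N

/-- Moyal–Weyl product on `W⁺` for a constant matrix `π`. -/
def wmulZPi {N : ℕ} (π : Matrix (Fin N) (Fin N) ℂ) (a b : WaZ N) : WaZ N := moyalZ yD π a b

/-- Moyal–Weyl product on `W⁺` for the standard symplectic Poisson matrix. -/
def wmulZ {n : ℕ} (a b : WaZ (2 * n)) : WaZ (2 * n) := wmulZPi (stdPi n) a b

/-- `W⁺`-valued exterior forms on `ℝ^{2n}`. -/
abbrev WFZ (n : ℕ) := Finset (Fin (2 * n)) → Pt n → WaZ (2 * n)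

/-- `∂/∂y^i` on `W⁺`. -/
def yDaZ {N : ℕ} (i : Fin N) (w : WaZ N) : WaZ N := fun m => yD i (w m)

/-- `δ` on `W⁺`-valued forms. -/
def deltaZ {n : ℕ} (a : WFZ n) : WFZ n :=
  fun S x => ∑ i ∈ S, insSign S i • yDaZ i (a (S.erase i) x)

/-- `∂/∂x^i` on `W⁺`-valued functions. -/
def xDZ {n : ℕ} (i : Fin (2 * n)) (f : Pt n → WaZ (2 * n)) (x : Pt n) : WaZ (2 * n) :=
  fun m => Wc.mk fun β =>
    fderiv ℝ (fun x' => MvPowerSeries.coeff (R := ℂ) β (f x' m)) x (Pi.single i 1)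

/-- Exterior derivative on `W⁺`-valued forms. -/
def extDZ {n : ℕ} (a : WFZ n) : WFZ n :=
  fun S x => ∑ i ∈ S, insSign S i • xDZ i (a (S.erase i)) x

/-- Product on `W⁺`-valued forms. -/
def wMulZF {n : ℕ} (a b : WFZ n) : WFZ n :=
  fun S x => ∑ S1 ∈ S.powerset, shuffleSign S1 (S \ S1) • wmulZ (a S1 x) (b (S \ S1) x)

/-- Graded commutator with a 1-form, on `W⁺`-valued forms. -/
def comm1Z {n : ℕ} (r a : WFZ n) : WFZ n :=
  fun S x => wMulZF r a S x - (-1 : ℂ) ^ (S.card - 1) • wMulZF a r S x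

/-- Division by `ℏ` on `W⁺` (exact: a shift of Laurent coefficients). -/
def shiftZ {N : ℕ} (a : WaZ N) : WaZ N := fun m => a (m + 1)

/-- The connection `D = −δ + d + (i/ℏ)[r,·]` on `W⁺`-valued forms. -/
def fedDZ {n : ℕ} (r a : WFZ n) : WFZ n :=
  fun S x => -deltaZ a S x + extDZ a S x + Complex.I • shiftZ (comm1Z r a S x)

/-- Termwise `∂/∂ℏ` on `W⁺`. -/
def hDZ {N : ℕ} (a : WaZ N) : WaZ N := fun m => ((m + 1 : ℤ) : ℂ) • a (m + 1)

/-- `∂/∂ℏ` on `W⁺`-valued forms. -/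
def hDZF {n : ℕ} (a : WFZ n) : WFZ n := fun S x => hDZ (a S x)

/-- `E` on `W⁺`. -/
def EulZ {N : ℕ} (a : WaZ N) : WaZ N := fun m => EulW (a m)

/-- `E` on `W⁺`-valued forms. -/
def EulZF {n : ℕ} (a : WFZ n) : WFZ n := fun S x => EulZ (a S x)

/-- `c₁` on `W⁺`. -/
def c1Za {n : ℕ} (a b : WaZ (2 * n)) : WaZ (2 * n) :=
  hDZ (wmulZ a b) - wmulZ (hDZ a) b - wmulZ a (hDZ b)

/-- `c₁` on `W⁺`-valued forms. -/
def c1ZF {n : ℕ} (a b : WFZ n) : WFZ n :=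
  fun S x => ∑ S1 ∈ S.powerset, shuffleSign S1 (S \ S1) • c1Za (a S1 x) (b (S \ S1) x)

/-- Smoothness of the coefficients of a `W⁺`-valued form. -/
def WFZ.Smooth {n : ℕ} (a : WFZ n) : Prop :=
  ∀ S m β, ContDiff ℝ (⊤ : ℕ∞) fun x => MvPowerSeries.coeff (R := ℂ) β (a S x m)

/-- Homogeneity of form-degree `q` for `W⁺`-valued forms. -/
def isFormZ {n : ℕ} (q : ℕ) (a : WFZ n) : Prop := ∀ S, S.card ≠ q → a S = 0

/-- A `W⁺`-valued form has power series coefficients (no negative powers of `ℏ`). -/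
def PSupp {n : ℕ} (a : WFZ n) : Prop := ∀ S x m, m < 0 → a S x m = 0

/-- A Laurent series is bounded below in `ℏ`-degree. -/
def BddZ {α : Type*} [Zero α] (f : ℤ → α) : Prop :=
  ∃ N : ℕ, ∀ m : ℤ, m < -(N : ℤ) → f m = 0

/-! ### Smooth functions and star-products on ℝ^N -/

/-- Complex-valued functions on `ℝ^N`. -/
abbrev SmFn (N : ℕ) := (Fin N → ℝ) → ℂ

/-- Partial derivative `∂/∂x^i` of a (smooth) function. -/
def xDf {N : ℕ} (i : Fin N) (f : SmFn N) : SmFn N := fun x => fderiv ℝ f x (Pi.single i 1)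

/-- Iterated partial derivative `∂^α`. -/
def xDfM {N : ℕ} (α : Fin N →₀ ℕ) (f : SmFn N) : SmFn N :=
  (List.finRange N).foldr (fun i g => (xDf i)^[α i] g) f

/-- Formal power series with function coefficients: `C^∞(ℝ^N,ℂ)[[ℏ]]`. -/
abbrev SmSer (N : ℕ) := ℕ → SmFn N

/-- Formal Laurent series with function coefficients: `C^∞(ℝ^N,ℂ)[ℏ⁻¹,ℏ]]`. -/
abbrev SmLau (N : ℕ) := ℤ → SmFn N

/-- All coefficients of a series are smooth. -/
def SmSer.Smooth {N : ℕ} (F : SmSer N) : Prop := ∀ m, ContDiff ℝ (⊤ : ℕ∞) (F m)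

/-- All coefficients of a Laurent series are smooth. -/
def SmLau.Smooth {N : ℕ} (F : SmLau N) : Prop := ∀ m, ContDiff ℝ (⊤ : ℕ∞) (F m)

/-- The Moyal star-product on `C^∞(ℝ^N,ℂ)[[ℏ]]` for a constant matrix `π`. -/
def fMul {N : ℕ} (π : Matrix (Fin N) (Fin N) ℂ) (F G : SmSer N) : SmSer N :=
  moyalN xDf π F G

/-- The Moyal star-product on Laurent series. -/
def fMulZ {N : ℕ} (π : Matrix (Fin N) (Fin N) ℂ) (F G : SmLau N) : SmLau N :=
  moyalZ xDf π F G

/-- The Moyal star-product with `ℏ`-dependent matrix `π(ℏ) = π₀ + ℏπ₁`. -/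
def fMulH {N : ℕ} (π0 π1 : Matrix (Fin N) (Fin N) ℂ) (F G : SmSer N) : SmSer N :=
  moyalNH xDf π0 π1 F G

/-- The constant series `1`. -/
def oneSer (N : ℕ) : SmSer N := fun m => if m = 0 then (fun _ => 1) else 0

/-- The standard Poisson bracket `{f,g} = Σ π^{ij} ∂_i f ∂_j g` on `ℝ^{2n}`. -/
def pb (n : ℕ) (f g : SmFn (2 * n)) : SmFn (2 * n) :=
  fun x => ∑ i, ∑ j, stdPi n i j * xDf i f x * xDf j g x

/-! ### Multidifferential operators and star-products -/

/-- A `k`-multidifferential operator on `C^∞(ℝ^N,ℂ)`: a finite sum of terms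
`u(x) (∂^{α₁}f₁)⋯(∂^{α_k}f_k)`, recorded by its finitely many coefficients. -/
abbrev MDOp (N k : ℕ) := (Fin k → (Fin N →₀ ℕ)) →₀ SmFn N

/-- Action of a multidifferential operator. -/
def MDOp.app {N k : ℕ} (c : MDOp N k) (f : Fin k → SmFn N) : SmFn N :=
  fun x => c.sum fun T u => u x * ∏ t, xDfM (T t) (f t) x

/-- A multidifferential operator has smooth coefficients. -/
def MDOp.Smooth {N k : ℕ} (c : MDOp N k) : Prop := ∀ T, ContDiff ℝ (⊤ : ℕ∞) (c T)

/-- A family of bidifferential operators `C_k`, extended `ℂ[[ℏ]]`-bilinearly: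
`F ⋆ G = Σ ℏ^{k+l+l'} C_k(F_l, G_{l'})`. -/
def starN {N : ℕ} (C : ℕ → MDOp N 2) (F G : SmSer N) : SmSer N :=
  fun m => ∑ k ∈ Finset.range (m + 1), ∑ l ∈ Finset.range (m - k + 1),
    MDOp.app (C k) ![F l, G (m - k - l)]

/-- The `ℂ[ℏ⁻¹,ℏ]]`-bilinear extension of a star-product to Laurent series. -/
def starZ {N : ℕ} (C : ℕ → MDOp N 2) (F G : SmLau N) : SmLau N :=
  fun m => ∑ᶠ p : ℕ × ℤ, MDOp.app (C p.1) ![F p.2, G (m - p.1 - p.2)]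

/-- Action of a Laurent cochain `c = Σ_l ℏ^l c_l` of multidifferential operators
on a `k`-tuple of Laurent series. -/
def lac {N k : ℕ} (cc : ℤ → MDOp N k) (u : Fin k → SmLau N) : SmLau N :=
  fun m => ∑ᶠ v : Fin k → ℤ, MDOp.app (cc (m - ∑ t, v t)) fun t => u t (v t)

/-- A differential star-product on `ℝ^{2n}` quantizing the standard symplectic
structure: `f ⋆ g = Σ ℏ^k C_k(f,g)` with `C_k` bidifferential, `C₀(f,g) = fg`,
`1` a unit, `⋆` associative, and `C₁(f,g) − C₁(g,f) = −i{f,g}`. -/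
structure DiffStar (n : ℕ) where
  C : ℕ → MDOp (2 * n) 2
  smooth : ∀ k, MDOp.Smooth (C k)
  C0 : ∀ f g : SmFn (2 * n), MDOp.app (C 0) ![f, g] = f * g
  unit_left : ∀ F : SmSer (2 * n), SmSer.Smooth F → starN C (oneSer (2 * n)) F = F
  unit_right : ∀ F : SmSer (2 * n), SmSer.Smooth F → starN C F (oneSer (2 * n)) = F
  assoc : ∀ F G H : SmSer (2 * n), SmSer.Smooth F → SmSer.Smooth G → SmSer.Smooth H →
    starN C (starN C F G) H = starN C F (starN C G H)
  C1skew : ∀ f g : SmFn (2 * n), ContDiff ℝ (⊤ : ℕ∞) f → ContDiff ℝ (⊤ : ℕ∞) g →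
    MDOp.app (C 1) ![f, g] - MDOp.app (C 1) ![g, f] = fun x => -Complex.I * pb n f g x

/-! ### Hochschild coboundary -/

/-- The Hochschild coboundary `b̃` of a `k`-cochain with respect to a product `mul`. -/
def hoch {A : Type*} [AddCommGroup A] (mul : A → A → A) {k : ℕ}
    (c : (Fin k → A) → A) : (Fin (k + 1) → A) → A :=
  fun u =>
    mul (u 0) (c fun t => u t.succ)
      + ∑ i : Fin k, ((-1 : ℤ) ^ ((i : ℕ) + 1)) •
          c (fun j => if (j : ℕ) < (i : ℕ) then u j.castSucc
            else if (j : ℕ) = (i : ℕ) then mul (u j.castSucc) (u j.succ)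
            else u j.succ)
      + ((-1 : ℤ) ^ (k + 1)) • mul (c fun t => u t.castSucc) (u (Fin.last k))

/-! ### Formal differential operators on ℂ[[y]] -/

/-- A formal `k`-differential operator on `ℂ[[y^1,…,y^N]]`:
`c(a₁,…,a_k) = Σ_T u^T (∂^{T 1}a₁)⋯(∂^{T k}a_k)` with coefficients
`u^T ∈ ℂ[[y]]` such that for each degree `d` only finitely many tuples `T` have a
coefficient containing a nonzero monomial of degree `≤ d`. -/
structure FDOp (N k : ℕ) where
  u : (Fin k → (Fin N →₀ ℕ)) → Wc N
  fin : ∀ d : ℕ,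
    {T : Fin k → (Fin N →₀ ℕ) | ∃ β : Fin N →₀ ℕ,
      (β.sum fun _ e => e) ≤ d ∧ MvPowerSeries.coeff (R := ℂ) β (u T) ≠ 0}.Finite

/-- Action of a formal differential operator (the defining sum converges in the
`y`-adic topology; each coefficient receives only finitely many contributions). -/
def FDOp.app {N k : ℕ} (P : FDOp N k) (a : Fin k → Wc N) : Wc N :=
  Wc.mk fun β => ∑ᶠ T : Fin k → (Fin N →₀ ℕ),
    MvPowerSeries.coeff (R := ℂ) β (P.u T * ∏ t, yDM (T t) (a t))

/-- Action of a Laurent cochain `c = Σ_l ℏ^l c_l` of formal differential operators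
on a `k`-tuple of elements of `W⁺`. -/
def flac {N k : ℕ} (cc : ℤ → FDOp N k) (a : Fin k → WaZ N) : WaZ N :=
  fun m => ∑ᶠ v : Fin k → ℤ, FDOp.app (cc (m - ∑ t, v t)) fun t => a t (v t)

/-! ### Flat sections, Taylor series and quantum exponential -/

/-- Fiberwise Taylor series of a smooth function at `x`. -/
def taylorW {N : ℕ} (f : SmFn N) (x : Fin N → ℝ) : Wc N :=
  Wc.mk fun β => (∏ i : Fin N, ((β i).factorial : ℂ))⁻¹ * xDfM β f x

/-- Sections of the Weyl bundle over `ℝ^{2n}` (W-valued 0-forms). -/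
abbrev Sect (n : ℕ) := Pt n → Wa (2 * n)

/-- The fiberwise Taylor lift of a series of smooth functions. -/
def taylorS {n : ℕ} (F : SmSer (2 * n)) : Sect n := fun x m => taylorW (F m) x

/-- A section has smooth coefficients. -/
def Sect.Smooth {n : ℕ} (u : Sect n) : Prop :=
  ∀ m β, ContDiff ℝ (⊤ : ℕ∞) fun x => MvPowerSeries.coeff (R := ℂ) β (u x m)

/-- A section is flat for `D = −δ + d`: its component equations read
`∂u/∂x^i = ∂u/∂y^i` for all `i`. -/
def Sect.Flat {n : ℕ} (u : Sect n) : Prop :=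
  ∀ (i : Fin (2 * n)) (x : Pt n), xD i u x = yDa i (u x)

/-- The symbol map `σ(u) = u|_{y=0}`. -/
def sigma {n : ℕ} (u : Sect n) : SmSer (2 * n) :=
  fun m x => MvPowerSeries.coeff (R := ℂ) 0 (u x m)

/-- Fiberwise Moyal–Weyl product of sections. -/
def wmulS {n : ℕ} (u v : Sect n) : Sect n := fun x => wmul (u x) (v x)

/-! ### Vector fields and Liouville-type operators -/

/-- Action of a vector field `X = Σ_j X^j ∂_j` on a function. -/
def XAct {N : ℕ} (X : Fin N → SmFn N) (f : SmFn N) : SmFn N :=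
  fun x => ∑ j, X j x * xDf j f x

/-- A smooth function viewed as a series concentrated in `ℏ`-degree `0`. -/
def embS {N : ℕ} (f : SmFn N) : SmSer N := fun m => if m = 0 then f else 0

/-- The Hochschild coboundary `b̃X(f,g) = f⋆(Xg) − X(f⋆g) + (Xf)⋆g` of a vector
field, for the Moyal star-product with constant matrix `π`. -/
def bXMoyal {N : ℕ} (π : Matrix (Fin N) (Fin N) ℂ) (X : Fin N → SmFn N)
    (f g : SmFn N) : SmSer N :=
  fMul π (embS f) (embS (XAct X g)) - (fun m => XAct X (fMul π (embS f) (embS g) m))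
    + fMul π (embS (XAct X f)) (embS g)

/-- The operator `ℏ ∂_ℏ + X` on `C^∞(ℝ^N,ℂ)[[ℏ]]`. -/
def LOp {N : ℕ} (X : Fin N → SmFn N) (F : SmSer N) : SmSer N :=
  fun m x => (m : ℂ) * F m x + XAct X (F m) x

/-- The derivative of a star-product with respect to `ℏ`:
`c(f,g) = Σ_{k≥1} k ℏ^{k-1} C_k(f,g)`, extended `ℂ[[ℏ]]`-bilinearly. -/
def dStar {N : ℕ} (C : ℕ → MDOp N 2) (F G : SmSer N) : SmSer N :=
  fun m => ∑ k ∈ Finset.Icc 1 (m + 1), (k : ℂ) •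
    ∑ l ∈ Finset.range (m + 1 - k + 1), MDOp.app (C k) ![F l, G (m + 1 - k - l)]

end StarPaper
namespace StarPaper

/-- The standard Poisson matrix on `T*T² = ℝ⁴` with coordinates `(θ₁, θ₂, p₁, p₂)`. -/
def piT0 : Matrix (Fin 4) (Fin 4) ℂ :=
  !![0, 0, 1, 0; 0, 0, 0, 1; -1, 0, 0, 0; 0, -1, 0, 0]

/-- The bivector `π₁ = −∂/∂p₁ ∧ ∂/∂p₂` (nonzero entries `π₁^{p₁p₂} = −1 = −π₁^{p₂p₁}`). -/
def piT1 : Matrix (Fin 4) (Fin 4) ℂ :=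
  !![0, 0, 0, 0; 0, 0, 0, 0; 0, 0, 0, -1; 0, 0, 1, 0]

/-- The Liouville vector field `X = p₁ ∂/∂p₁ + p₂ ∂/∂p₂`. -/
def liouvilleT : Fin 4 → SmFn 4 :=
  fun j x => if j = 2 then (x 2 : ℂ) else if j = 3 then (x 3 : ℂ) else 0

/-!
The Liouville field is the weighted Euler field `X = Σ_j c_j x^j ∂_j` with weights
`c = (0, 0, 1, 1)`, and `[∂_i, X] = c_i ∂_i`; so on `∂_{i₁}⋯∂_{i_k} f` the field `X` acts as
`∂_{i₁}⋯∂_{i_k} (X f)` minus the total weight `c_{i₁} + ⋯ + c_{i_k}` times `∂_{i₁}⋯∂_{i_k} f`.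
Every nonzero entry of `π₀` joins two directions of total weight `1` and every nonzero entry
of `π₁` two directions of total weight `2`. Hence in the `k`-th Moyal term, the part with `d`
factors of `π₁` (which carries `ℏ^{k+d}`) satisfies
`X T(a, b) = T(X a, b) + T(a, X b) - (k + d) T(a, b)`, and the defect `k + d` is exactly
what `ℏ∂_ℏ` contributes.
-/

open scoped ContDiff

section PartialDerivatives

variable {N : ℕ}

theorem xDf_add {f g : SmFn N} (hf : Differentiable ℝ f) (hg : Differentiable ℝ g)
    (i : Fin N) : xDf i (f + g) = xDf i f + xDf i g := by
  ext x
  simp [xDf, fderiv_add (hf x) (hg x)]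

theorem xDf_sub {f g : SmFn N} (hf : Differentiable ℝ f) (hg : Differentiable ℝ g)
    (i : Fin N) : xDf i (f - g) = xDf i f - xDf i g := by
  ext x
  simp [xDf, fderiv_sub (hf x) (hg x)]

theorem xDf_const_smul (c : ℂ) {f : SmFn N} (hf : Differentiable ℝ f) (i : Fin N) :
    xDf i (c • f) = c • xDf i f := by
  ext x
  simp [xDf, fderiv_const_smul (hf x)]

theorem xDf_mul {f g : SmFn N} (hf : Differentiable ℝ f) (hg : Differentiable ℝ g)
    (i : Fin N) : xDf i (f * g) = xDf i f * g + f * xDf i g := by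
  ext x
  simp only [xDf, fderiv_mul (hf x) (hg x), add_apply,
    smul_apply, smul_eq_mul, Pi.add_apply, Pi.mul_apply]
  ring

theorem xDf_sum {ι : Type*} (s : Finset ι) {f : ι → SmFn N}
    (hf : ∀ a ∈ s, Differentiable ℝ (f a)) (i : Fin N) :
    xDf i (∑ a ∈ s, f a) = ∑ a ∈ s, xDf i (f a) := by
  ext x
  simp [xDf, fderiv_sum fun a ha => hf a ha x]

theorem xDf_coord (i j : Fin N) :
    xDf i (fun x => (x j : ℂ)) = fun _ => if i = j then 1 else 0 := by
  ext x
  have hcoord : (fun x : Fin N → ℝ => (x j : ℂ))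
      = Complex.ofRealCLM.comp (ContinuousLinearMap.proj (R := ℝ) j) := rfl
  simp only [xDf, hcoord, ContinuousLinearMap.fderiv, ContinuousLinearMap.comp_apply,
    ContinuousLinearMap.proj_apply, Pi.single_apply, eq_comm, Complex.ofRealCLM_apply]
  split_ifs <;> simp

theorem contDiff_xDf {f : SmFn N} (hf : ContDiff ℝ ∞ f) (i : Fin N) :
    ContDiff ℝ ∞ (xDf i f) :=
  (hf.fderiv_right le_rfl).clm_apply contDiff_const

theorem xDf_comm {f : SmFn N} (hf : ContDiff ℝ ∞ f) (i j : Fin N) :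
    xDf i (xDf j f) = xDf j (xDf i f) := by
  ext x
  have hsymm : IsSymmSndFDerivAt ℝ f x :=
    hf.contDiffAt.isSymmSndFDerivAt (by
      rw [minSmoothness_of_isRCLikeNormedField]; exact WithTop.coe_le_coe.mpr le_top)
  have hsecond : ∀ v w : Fin N → ℝ,
      fderiv ℝ (fun y => fderiv ℝ f y w) x v = fderiv ℝ (fderiv ℝ f) x v w := fun v w => by
    rw [fderiv_clm_apply ((hf.fderiv_right (m := ∞) le_rfl).differentiable (by simp) x)
      (differentiableAt_const w)]
    simp
  change fderiv ℝ (fun y => fderiv ℝ f y (Pi.single j 1)) x (Pi.single i 1)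
    = fderiv ℝ (fun y => fderiv ℝ f y (Pi.single i 1)) x (Pi.single j 1)
  rw [hsecond, hsecond, hsymm]

end PartialDerivatives

section IteratedDerivatives

variable {N : ℕ}

theorem iterD_succ {k : ℕ} (v : Fin (k + 1) → Fin N) (a : SmFn N) :
    iterD xDf v a = xDf (v 0) (iterD xDf (fun t => v t.succ) a) := rfl

theorem contDiff_iterD_xDf {a : SmFn N} (ha : ContDiff ℝ ∞ a) :
    ∀ {k : ℕ} (v : Fin k → Fin N), ContDiff ℝ ∞ (iterD xDf v a)
  | 0, _ => ha
  | _ + 1, v => contDiff_xDf (contDiff_iterD_xDf ha fun t => v t.succ) (v 0)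

theorem iterD_xDf_smul_add (c : ℂ) {a b : SmFn N} (ha : ContDiff ℝ ∞ a)
    (hb : ContDiff ℝ ∞ b) :
    ∀ {k : ℕ} (v : Fin k → Fin N),
      iterD xDf v (c • a + b) = c • iterD xDf v a + iterD xDf v b
  | 0, _ => rfl
  | _ + 1, v => by
    have hdiff : ∀ {f : SmFn N}, ContDiff ℝ ∞ f →
        Differentiable ℝ (iterD xDf (fun t => v t.succ) f) :=
      fun hf => (contDiff_iterD_xDf hf _).differentiable (by simp)
    rw [iterD_succ, iterD_xDf_smul_add c ha hb, xDf_add ((hdiff ha).const_smul c) (hdiff hb),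
      xDf_const_smul c (hdiff ha)]
    rfl

end IteratedDerivatives

section EulerField

variable {N : ℕ}

theorem XAct_const_smul (X : Fin N → SmFn N) (c : ℂ) {f : SmFn N} (hf : Differentiable ℝ f) :
    XAct X (c • f) = c • XAct X f := by
  ext x
  simp [XAct, xDf_const_smul c hf, Finset.mul_sum, mul_left_comm]

theorem XAct_mul (X : Fin N → SmFn N) {f g : SmFn N} (hf : Differentiable ℝ f)
    (hg : Differentiable ℝ g) : XAct X (f * g) = XAct X f * g + f * XAct X g := by
  ext x
  simp only [XAct, xDf_mul hf hg, Pi.add_apply, Pi.mul_apply, Finset.sum_mul, Finset.mul_sum,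
    ← Finset.sum_add_distrib]
  exact Finset.sum_congr rfl fun j _ => by ring

theorem XAct_sum (X : Fin N → SmFn N) {ι : Type*} (s : Finset ι) {f : ι → SmFn N}
    (hf : ∀ a ∈ s, Differentiable ℝ (f a)) :
    XAct X (∑ a ∈ s, f a) = ∑ a ∈ s, XAct X (f a) := by
  ext x
  simp only [XAct, xDf_sum s hf, Finset.sum_apply, Finset.mul_sum]
  exact Finset.sum_comm

def eulerField (c : Fin N → ℂ) : Fin N → SmFn N := fun j x => c j * x j

theorem XAct_eulerField_eq_sum (c : Fin N → ℂ) (f : SmFn N) :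
    XAct (eulerField c) f = ∑ j, c j • ((fun x => (x j : ℂ)) * xDf j f) := by
  ext x
  simp [XAct, eulerField, Finset.sum_apply, mul_assoc]

theorem contDiff_XAct_eulerField (c : Fin N → ℂ) {f : SmFn N} (hf : ContDiff ℝ ∞ f) :
    ContDiff ℝ ∞ (XAct (eulerField c) f) := by
  unfold XAct eulerField
  exact ContDiff.sum fun j _ => (contDiff_const.mul
    (Complex.ofRealCLM.contDiff.comp (contDiff_apply ℝ ℝ j))).mul (contDiff_xDf hf j)

theorem xDf_XAct_eulerField (c : Fin N → ℂ) {f : SmFn N} (hf : ContDiff ℝ ∞ f) (i : Fin N) :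
    xDf i (XAct (eulerField c) f) = XAct (eulerField c) (xDf i f) + c i • xDf i f := by
  have hcoord : ∀ j, Differentiable ℝ fun x : Fin N → ℝ => (x j : ℂ) := fun j =>
    Complex.ofRealCLM.differentiable.comp (differentiable_apply j)
  have hdf : ∀ j, Differentiable ℝ (xDf j f) := fun j =>
    (contDiff_xDf hf j).differentiable (by simp)
  rw [XAct_eulerField_eq_sum, XAct_eulerField_eq_sum,
    xDf_sum _ fun j _ => ((hcoord j).mul (hdf j)).const_smul (c j)]
  simp only [xDf_const_smul _ ((hcoord _).mul (hdf _)), xDf_mul (hcoord _) (hdf _), xDf_coord,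
    xDf_comm hf i]
  ext x
  simp [Finset.sum_apply, Finset.sum_add_distrib, add_comm]

theorem XAct_eulerField_iterD (c : Fin N → ℂ) {a : SmFn N} (ha : ContDiff ℝ ∞ a) :
    ∀ {k : ℕ} (v : Fin k → Fin N), XAct (eulerField c) (iterD xDf v a)
      = iterD xDf v (XAct (eulerField c) a) - (∑ t, c (v t)) • iterD xDf v a
  | 0, _ => by simp [iterD]
  | _ + 1, v => by
    have hg := contDiff_iterD_xDf ha fun t => v t.succ
    have hdg : Differentiable ℝ (iterD xDf (fun t => v t.succ) a) := hg.differentiable (by simp)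
    have hdXg : Differentiable ℝ (iterD xDf (fun t => v t.succ) (XAct (eulerField c) a)) :=
      (contDiff_iterD_xDf (contDiff_XAct_eulerField c ha) _).differentiable (by simp)
    have hcomm := xDf_XAct_eulerField c hg (v 0)
    rw [XAct_eulerField_iterD c ha, xDf_sub hdXg (hdg.const_smul _), xDf_const_smul _ hdg]
      at hcomm
    rw [iterD_succ, iterD_succ, Fin.sum_univ_succ, eq_sub_of_add_eq hcomm.symm]
    module

end EulerField

section MoyalTerm

variable {N : ℕ} (π0 π1 : Matrix (Fin N) (Fin N) ℂ)

def moyalWeight {k : ℕ} (d : ℕ) (i j : Fin k → Fin N) : ℂ :=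
  ∑ T ∈ Finset.univ.powerset.filter (fun T : Finset (Fin k) => T.card = d),
    (∏ t ∈ T, π1 (i t) (j t)) * ∏ t ∈ Tᶜ, π0 (i t) (j t)

theorem moyalTermH_eq_sum (k d : ℕ) (a b : SmFn N) :
    moyalTermH xDf π0 π1 k d a b = ((-Complex.I / 2) ^ k / (k.factorial : ℂ)) •
      ∑ i : Fin k → Fin N, ∑ j : Fin k → Fin N,
        moyalWeight π0 π1 d i j • (iterD xDf i a * iterD xDf j b) := rfl

theorem sum_add_sum_mul_moyalWeight {c : Fin N → ℂ}
    (h0 : ∀ a b, π0 a b ≠ 0 → c a + c b = 1) (h1 : ∀ a b, π1 a b ≠ 0 → c a + c b = 2)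
    {k : ℕ} (d : ℕ) (i j : Fin k → Fin N) :
    (∑ t, c (i t) + ∑ t, c (j t)) * moyalWeight π0 π1 d i j
      = (k + d) * moyalWeight π0 π1 d i j := by
  simp only [moyalWeight, Finset.mul_sum]
  refine Finset.sum_congr rfl fun T hT => ?_
  by_cases hz : (∏ t ∈ T, π1 (i t) (j t)) * ∏ t ∈ Tᶜ, π0 (i t) (j t) = 0
  · simp [hz]
  obtain ⟨hT1, hT0⟩ := mul_ne_zero_iff.1 hz
  have hcard : (T.card : ℂ) + Tᶜ.card = k := by
    exact_mod_cast (Finset.card_add_card_compl T).trans (Fintype.card_fin k)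
  have hsum : ∑ t, c (i t) + ∑ t, c (j t) = k + d := by
    rw [← Finset.sum_add_distrib, ← Finset.sum_add_sum_compl T,
      Finset.sum_congr rfl fun t ht => h1 _ _ (Finset.prod_ne_zero_iff.1 hT1 t ht),
      Finset.sum_congr rfl fun t ht => h0 _ _ (Finset.prod_ne_zero_iff.1 hT0 t ht),
      ← (Finset.mem_filter.1 hT).2]
    simp only [Finset.sum_const, nsmul_eq_mul, mul_one]
    linear_combination hcard
  rw [hsum]

variable {π0 π1}

theorem contDiff_moyalTermH {a b : SmFn N} (ha : ContDiff ℝ ∞ a) (hb : ContDiff ℝ ∞ b)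
    (k d : ℕ) : ContDiff ℝ ∞ (moyalTermH xDf π0 π1 k d a b) := by
  simp only [moyalTermH_eq_sum, Finset.sum_fn]
  exact (ContDiff.sum fun i _ => ContDiff.sum fun j _ =>
    ((contDiff_iterD_xDf ha i).mul (contDiff_iterD_xDf hb j)).const_smul
      (moyalWeight π0 π1 d i j)).const_smul ((-Complex.I / 2) ^ k / (k.factorial : ℂ))

theorem moyalTermH_smul_add_left (c : ℂ) {a a' b : SmFn N} (ha : ContDiff ℝ ∞ a)
    (ha' : ContDiff ℝ ∞ a') (k d : ℕ) :
    moyalTermH xDf π0 π1 k d (c • a + a') b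
      = c • moyalTermH xDf π0 π1 k d a b + moyalTermH xDf π0 π1 k d a' b := by
  simp only [moyalTermH_eq_sum, iterD_xDf_smul_add c ha ha', add_mul, smul_add, smul_mul_assoc,
    Finset.sum_add_distrib, Finset.smul_sum]
  simp only [smul_comm c]

theorem moyalTermH_smul_add_right (c : ℂ) {a b b' : SmFn N} (hb : ContDiff ℝ ∞ b)
    (hb' : ContDiff ℝ ∞ b') (k d : ℕ) :
    moyalTermH xDf π0 π1 k d a (c • b + b')
      = c • moyalTermH xDf π0 π1 k d a b + moyalTermH xDf π0 π1 k d a b' := by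
  simp only [moyalTermH_eq_sum, iterD_xDf_smul_add c hb hb', mul_add, smul_add, mul_smul_comm,
    Finset.sum_add_distrib, Finset.smul_sum]
  simp only [smul_comm c]

theorem XAct_eulerField_moyalTermH {c : Fin N → ℂ}
    (h0 : ∀ a b, π0 a b ≠ 0 → c a + c b = 1) (h1 : ∀ a b, π1 a b ≠ 0 → c a + c b = 2)
    {a b : SmFn N} (ha : ContDiff ℝ ∞ a) (hb : ContDiff ℝ ∞ b) (k d : ℕ) :
    XAct (eulerField c) (moyalTermH xDf π0 π1 k d a b)
      = moyalTermH xDf π0 π1 k d (XAct (eulerField c) a) b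
        + moyalTermH xDf π0 π1 k d a (XAct (eulerField c) b)
        - ((k : ℂ) + d) • moyalTermH xDf π0 π1 k d a b := by
  have hdiff : ∀ i j : Fin k → Fin N, Differentiable ℝ (iterD xDf i a * iterD xDf j b) :=
    fun i j => ((contDiff_iterD_xDf ha i).mul (contDiff_iterD_xDf hb j)).differentiable (by simp)
  have hterm : ∀ i j : Fin k → Fin N,
      XAct (eulerField c) (moyalWeight π0 π1 d i j • (iterD xDf i a * iterD xDf j b))
        = moyalWeight π0 π1 d i j • (iterD xDf i (XAct (eulerField c) a) * iterD xDf j b)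
          + moyalWeight π0 π1 d i j • (iterD xDf i a * iterD xDf j (XAct (eulerField c) b))
          - ((k : ℂ) + d) • moyalWeight π0 π1 d i j • (iterD xDf i a * iterD xDf j b) := by
    intro i j
    rw [smul_smul, ← sum_add_sum_mul_moyalWeight π0 π1 h0 h1, XAct_const_smul _ _ (hdiff i j),
      XAct_mul _ ((contDiff_iterD_xDf ha i).differentiable (by simp))
        ((contDiff_iterD_xDf hb j).differentiable (by simp)),
      XAct_eulerField_iterD c ha, XAct_eulerField_iterD c hb]
    simp only [sub_mul, mul_sub, smul_mul_assoc, mul_smul_comm]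
    module
  have hinner : ∀ i : Fin k → Fin N, Differentiable ℝ
      (∑ j, moyalWeight π0 π1 d i j • (iterD xDf i a * iterD xDf j b)) :=
    fun i => Differentiable.sum fun j _ => (hdiff i j).const_smul _
  rw [moyalTermH_eq_sum, XAct_const_smul _ _ (Differentiable.sum fun i _ => hinner i),
    XAct_sum _ _ fun i _ => hinner i]
  simp only [XAct_sum _ _ fun j _ => (hdiff _ j).const_smul _, hterm, moyalTermH_eq_sum,
    Finset.sum_sub_distrib, Finset.sum_add_distrib, ← Finset.smul_sum, smul_sub, smul_add]
  rw [smul_comm ((-Complex.I / 2) ^ k / (k.factorial : ℂ))]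

theorem natCast_smul_add_XAct_eulerField_moyalTermH {c : Fin N → ℂ}
    (h0 : ∀ a b, π0 a b ≠ 0 → c a + c b = 1) (h1 : ∀ a b, π1 a b ≠ 0 → c a + c b = 2)
    {a b : SmFn N} (ha : ContDiff ℝ ∞ a) (hb : ContDiff ℝ ∞ b) {k d l r m : ℕ}
    (hm : k + d + l + r = m) :
    (m : ℂ) • moyalTermH xDf π0 π1 k d a b + XAct (eulerField c) (moyalTermH xDf π0 π1 k d a b)
      = moyalTermH xDf π0 π1 k d ((l : ℂ) • a + XAct (eulerField c) a) b
        + moyalTermH xDf π0 π1 k d a ((r : ℂ) • b + XAct (eulerField c) b) := by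
  rw [XAct_eulerField_moyalTermH h0 h1 ha hb, moyalTermH_smul_add_left _ ha
    (contDiff_XAct_eulerField c ha), moyalTermH_smul_add_right _ hb
    (contDiff_XAct_eulerField c hb), ← hm]
  push_cast
  module

end MoyalTerm

section Derivation

variable {N : ℕ} {π0 π1 : Matrix (Fin N) (Fin N) ℂ} {c : Fin N → ℂ}

theorem LOp_apply (X : Fin N → SmFn N) (F : SmSer N) (m : ℕ) :
    LOp X F m = (m : ℂ) • F m + XAct X (F m) := rfl

theorem LOp_eulerField_fMulH
    (h0 : ∀ a b, π0 a b ≠ 0 → c a + c b = 1) (h1 : ∀ a b, π1 a b ≠ 0 → c a + c b = 2)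
    {F G : SmSer N} (hF : F.Smooth) (hG : G.Smooth) :
    LOp (eulerField c) (fMulH π0 π1 F G)
      = fMulH π0 π1 (LOp (eulerField c) F) G + fMulH π0 π1 F (LOp (eulerField c) G) := by
  funext m
  have hdiff : ∀ k d l r, Differentiable ℝ (moyalTermH xDf π0 π1 k d (F l) (G r)) :=
    fun k d l r => (contDiff_moyalTermH (hF l) (hG r) k d).differentiable (by simp)
  simp only [LOp_apply, fMulH, moyalNH, Pi.add_apply]
  rw [XAct_sum _ _ fun k _ => Differentiable.sum fun d _ => Differentiable.sum fun l _ =>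
    hdiff k d l _]
  simp only [XAct_sum _ _ fun d _ => Differentiable.sum fun l _ => hdiff _ d l _,
    XAct_sum _ _ fun l _ => hdiff _ _ l _, Finset.smul_sum, ← Finset.sum_add_distrib]
  refine Finset.sum_congr rfl fun k hk => Finset.sum_congr rfl fun d hd =>
    Finset.sum_congr rfl fun l hl => ?_
  simp only [Finset.mem_range] at hk hd hl
  exact natCast_smul_add_XAct_eulerField_moyalTermH h0 h1 (hF l) (hG _) (by omega)

end Derivation

theorem liouvilleT_eq_eulerField : liouvilleT = eulerField ![0, 0, 1, 1] := by
  funext j x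
  fin_cases j <;> simp [liouvilleT, eulerField]

/-- For the Moyal star-product on `ℝ⁴ = T*T²` built from the
`ℏ`-dependent Poisson matrix `π(ℏ) = π₀ + ℏπ₁`, the classical Liouville vector field
`X = p₁∂_{p₁} + p₂∂_{p₂}` makes `ℏ∂_ℏ + X` a derivation (a quantum Liouville
operator). -/
theorem torus_example_liouville :
    ∀ F G : SmSer 4, SmSer.Smooth F → SmSer.Smooth G →
      LOp liouvilleT (fMulH piT0 piT1 F G) =
        fMulH piT0 piT1 (LOp liouvilleT F) G
          + fMulH piT0 piT1 F (LOp liouvilleT G) := by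
  intro F G hF hG
  rw [liouvilleT_eq_eulerField]
  refine LOp_eulerField_fMulH (fun a b h => ?_) (fun a b h => ?_) hF hG
  · fin_cases a <;> fin_cases b <;> simp_all [piT0]
  · fin_cases a <;> fin_cases b <;> simp_all [piT1, one_add_one_eq_two]

end StarPaper
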